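/- arXiv:2209.02424 — 7 statements merged into one kernel-verified Lean document; each statement's English description precedes it below -/
import Mathlib

section
/- The map from policies to occupation measures is continuously differentiable: for a fixed transition kernel P, the map π ↦ μ_π is continuously differentiable (of class C¹) on the set Π of stationary policies (i.e., it is the restriction to Π of a map that is differentiable with continuous derivative within Π). -/
/-!
For a policy `π` the matrix `γ P_π` has `∞`-operator norm at most `γ < 1`, so the Neumann series
gives `ρ_π = νᵀ (1 - γ P_π)⁻¹`. Since `π ↦ P_π` is linear and inversion is smooth on the units of
a Banach algebra, `μ_π(s, a) = π(s, a) ρ_π(s)` is smooth on a neighbourhood of every policy.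
-/

open scoped BigOperators

variable {S A : Type*}

/-- A stationary policy: nonnegative entries with unit row sums. -/
def IsPolicy [Fintype A] (π : S → A → ℝ) : Prop :=
  (∀ s a, 0 ≤ π s a) ∧ ∀ s, ∑ a, π s a = 1

/-- A transition kernel: nonnegative entries with unit row sums. -/
def IsKernel [Fintype S] (P : S × A → S → ℝ) : Prop :=
  (∀ p s', 0 ≤ P p s') ∧ ∀ p, ∑ s', P p s' = 1

/-- An initial distribution. -/
def IsInitDist [Fintype S] (ν : S → ℝ) : Prop :=
  (∀ s, 0 ≤ ν s) ∧ ∑ s, ν s = 1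

/-- Induced state transition matrix `P_π(s,s') = Σ_a π(s,a) P((s,a),s')`. -/
noncomputable def polMatrix [Fintype A] (P : S × A → S → ℝ) (π : S → A → ℝ) :
    Matrix S S ℝ :=
  Matrix.of fun s s' => ∑ a, π s a * P (s, a) s'

/-- Discounted state distribution `ρ_π(s) = Σ_t γ^t ((P_πᵀ)^t ν)(s)`. -/
noncomputable def stateDist [Fintype S] [Fintype A] [DecidableEq S]
    (γ : ℝ) (ν : S → ℝ) (P : S × A → S → ℝ) (π : S → A → ℝ) (s : S) : ℝ :=
  ∑' t : ℕ, γ ^ t * (((polMatrix P π).transpose ^ t).mulVec ν s)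

/-- Discounted occupation measure `μ_π(s,a) = π(s,a) ρ_π(s)`. -/
noncomputable def occ [Fintype S] [Fintype A] [DecidableEq S]
    (γ : ℝ) (ν : S → ℝ) (P : S × A → S → ℝ) (π : S → A → ℝ) (s : S) (a : A) : ℝ :=
  π s a * stateDist γ ν P π s

open Matrix

-- The row-sum norm, for which every stochastic matrix has norm at most `1`.
attribute [local instance] Matrix.linftyOpNormedAddCommGroup Matrix.linftyOpNormedRing
  Matrix.linftyOpNormedSpace Matrix.linftyOpNormedAlgebra

theorem Matrix.linfty_opNorm_le_one_of_stochastic {m n : Type*} [Fintype m] [Fintype n]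
    {M : Matrix m n ℝ} (hM : ∀ i j, 0 ≤ M i j) (hrow : ∀ i, ∑ j, M i j = 1) : ‖M‖ ≤ 1 := by
  rw [linfty_opNorm_def, NNReal.coe_le_one]
  refine Finset.sup_le fun i _ => le_of_eq ?_
  rw [← NNReal.coe_inj]
  push_cast
  simp_rw [Real.norm_of_nonneg (hM i _)]
  exact hrow i

theorem Matrix.hasSum_vecMul_pow {𝕜 n : Type*} [RCLike 𝕜] [Fintype n] [DecidableEq n]
    {M : Matrix n n 𝕜} (h : ‖M‖ < 1) (ν : n → 𝕜) :
    HasSum (fun t : ℕ => ν ᵥ* M ^ t) (ν ᵥ* Ring.inverse (1 - M)) :=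
  LinearMap.toContinuousLinearMap (vecMulBilin 𝕜 𝕜 ν : Matrix n n 𝕜 →ₗ[𝕜] (n → 𝕜))
    |>.hasSum (hasSum_geom_series_inverse M h)

section

variable [Fintype S] [Fintype A] {P : S × A → S → ℝ} {π : S → A → ℝ}

theorem polMatrix_nonneg (hP : IsKernel P) (hπ : IsPolicy π) (s s' : S) :
    0 ≤ polMatrix P π s s' :=
  Finset.sum_nonneg fun a _ => mul_nonneg (hπ.1 s a) (hP.1 (s, a) s')

theorem sum_polMatrix (hP : IsKernel P) (hπ : IsPolicy π) (s : S) :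
    ∑ s', polMatrix P π s s' = 1 := by
  simp only [polMatrix, of_apply]
  rw [Finset.sum_comm]
  simp_rw [← Finset.mul_sum, hP.2, mul_one, hπ.2]

theorem norm_smul_polMatrix_lt_one {γ : ℝ} (hγ : |γ| < 1) (hP : IsKernel P)
    (hπ : IsPolicy π) : ‖γ • polMatrix P π‖ < 1 :=
  calc ‖γ • polMatrix P π‖ ≤ |γ| * ‖polMatrix P π‖ := norm_smul_le _ _
    _ ≤ |γ| * 1 := by
      gcongr
      exact linfty_opNorm_le_one_of_stochastic (polMatrix_nonneg hP hπ) (sum_polMatrix hP hπ)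
    _ < 1 := by rwa [mul_one]

variable (P) in
noncomputable def polMatrixLinearMap : (S → A → ℝ) →ₗ[ℝ] Matrix S S ℝ where
  toFun := polMatrix P
  map_add' π₁ π₂ := by
    ext s s'
    simp [polMatrix, add_mul, Finset.sum_add_distrib]
  map_smul' c π := by
    ext s s'
    simp [polMatrix, Finset.mul_sum, mul_assoc]

theorem contDiff_polMatrix {n : WithTop ℕ∞} (P : S × A → S → ℝ) :
    ContDiff ℝ n (polMatrix P) :=
  (polMatrixLinearMap P).toContinuousLinearMap.contDiff

variable [DecidableEq S]

theorem contDiffAt_ringInverse_one_sub_smul_polMatrix {γ : ℝ} (hγ : |γ| < 1)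
    (hP : IsKernel P) (hπ : IsPolicy π) {n : WithTop ℕ∞} :
    ContDiffAt ℝ n (fun σ => Ring.inverse (1 - γ • polMatrix P σ)) π := by
  obtain ⟨u, hu⟩ := isUnit_one_sub_of_norm_lt_one (norm_smul_polMatrix_lt_one hγ hP hπ)
  have hinv := contDiffAt_ringInverse ℝ (n := n) u
  rw [hu] at hinv
  exact hinv.comp π (contDiff_const.sub ((contDiff_polMatrix P).const_smul γ)).contDiffAt

theorem stateDist_eq_vecMul_ringInverse {γ : ℝ} (hγ : |γ| < 1) (ν : S → ℝ)
    (hP : IsKernel P) (hπ : IsPolicy π) :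
    stateDist γ ν P π = ν ᵥ* Ring.inverse (1 - γ • polMatrix P π) := by
  funext s
  refine Eq.trans ?_
    (Pi.hasSum.mp (hasSum_vecMul_pow (norm_smul_polMatrix_lt_one hγ hP hπ) ν) s).tsum_eq
  simp only [stateDist, ← transpose_pow, mulVec_transpose, smul_pow, vecMul_smul,
    Pi.smul_apply, smul_eq_mul]

end

theorem stmt4_general [Fintype S] [Fintype A] [DecidableEq S]
    (γ : ℝ) (hγ : γ ∈ Set.Ioo (0 : ℝ) 1)
    (ν : S → ℝ)
    (P : S × A → S → ℝ) (hP : IsKernel P) :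
    ContDiffOn ℝ 1 (fun π : S → A → ℝ => occ γ ν P π) {π | IsPolicy π} := by
  replace hγ : |γ| < 1 := (abs_of_pos hγ.1).trans_lt hγ.2
  have hsmooth : ∀ π₀ ∈ {π : S → A → ℝ | IsPolicy π}, ContDiffAt ℝ 1
      (fun π s a => π s a * (ν ᵥ* Ring.inverse (1 - γ • polMatrix P π)) s) π₀ := by
    intro π₀ hπ₀
    have hρ : ContDiffAt ℝ 1 (fun π => ν ᵥ* Ring.inverse (1 - γ • polMatrix P π)) π₀ :=
      LinearMap.toContinuousLinearMap (vecMulBilin ℝ ℝ ν : Matrix S S ℝ →ₗ[ℝ] (S → ℝ))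
        |>.contDiff.comp_contDiffAt π₀
          (contDiffAt_ringInverse_one_sub_smul_polMatrix hγ hP hπ₀)
    fun_prop
  refine ContDiffOn.congr (fun π₀ hπ₀ => (hsmooth π₀ hπ₀).contDiffWithinAt) fun π hπ => ?_
  funext s a
  rw [occ, stateDist_eq_vecMul_ringInverse hγ ν hP hπ]

/-- for a fixed transition kernel `P`, the policy-to-occupation-measure map
`π ↦ μ_π` is continuously differentiable (class `C¹`) on the set `Π` of stationary
policies (in the sense of `ContDiffOn`, i.e. differentiability within `Π` with
continuous derivative within `Π`). -/
theorem stmt4 [Fintype S] [Fintype A] [Nonempty S] [Nonempty A] [DecidableEq S]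
    (γ : ℝ) (hγ : γ ∈ Set.Ioo (0 : ℝ) 1)
    (ν : S → ℝ) (hν : IsInitDist ν)
    (P : S × A → S → ℝ) (hP : IsKernel P) :
    ContDiffOn ℝ 1 (fun π : S → A → ℝ => occ γ ν P π) {π | IsPolicy π} :=
  stmt4_general γ hγ ν P hP
end

section
/- Lipschitz bound for the normalization map: suppose ν(s) > 0 for all s ∈ S and let ν_min := min_{s∈S} ν(s). For any μ₁, μ₂ ∈ ℝ^{S×A} with nonnegative entries satisfying Σ_{a∈A} μ_j(s,a) ≥ ν(s) for all s ∈ S and j ∈ {1,2}, the normalized policies satisfy ‖π_{μ₁} − π_{μ₂}‖₂ ≤ (2/ν_min) ‖μ₁ − μ₂‖₁, where π_μ(s,a) := μ(s,a)/Σ_{a'∈A} μ(s,a'). -/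
open scoped BigOperators

/-- Normalization of an occupation measure into a policy:
`π_μ(s,a) = μ(s,a) / Σ_{a'} μ(s,a')`. -/
noncomputable def normPol {S A : Type*} [Fintype A] (μ : S → A → ℝ) (s : S) (a : A) : ℝ :=
  μ s a / ∑ a', μ s a'

lemma l2_le_l1 {ι : Type*} [Fintype ι] (x : ι → ℝ) :
    Real.sqrt (∑ i, x i ^ 2) ≤ ∑ i, |x i| := by
  have h1 : ∑ i, x i ^ 2 = ∑ i, |x i| ^ 2 := by simp [sq_abs]
  rw [h1]
  have h2 : ∑ i, |x i| ^ 2 ≤ (∑ i, |x i|) ^ 2 :=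
    Finset.sum_sq_le_sq_sum_of_nonneg (fun i _ => abs_nonneg _)
  calc Real.sqrt (∑ i, |x i| ^ 2) ≤ Real.sqrt ((∑ i, |x i|) ^ 2) := Real.sqrt_le_sqrt h2
    _ = ∑ i, |x i| := Real.sqrt_sq (Finset.sum_nonneg fun i _ => abs_nonneg _)

lemma row_bound {A : Type*} [Fintype A] (μ₁ μ₂ : A → ℝ) (m : ℝ) (hm : 0 < m)
    (h2nn : ∀ a, 0 ≤ μ₂ a)
    (h1 : m ≤ ∑ a, μ₁ a) (h2 : m ≤ ∑ a, μ₂ a) :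
    ∑ a, |μ₁ a / (∑ a', μ₁ a') - μ₂ a / (∑ a', μ₂ a')| ≤
      (2 / m) * ∑ a, |μ₁ a - μ₂ a| := by
  set r1 := ∑ a, μ₁ a with hr1def
  set r2 := ∑ a, μ₂ a with hr2def
  have hr1 : 0 < r1 := lt_of_lt_of_le hm h1
  have hr2 : 0 < r2 := lt_of_lt_of_le hm h2
  set Smax := ∑ a, |μ₁ a - μ₂ a| with hS
  have hSnn : 0 ≤ Smax := Finset.sum_nonneg fun a _ => abs_nonneg _
  have hdiff : |r2 - r1| ≤ Smax := by
    rw [hS, hr1def, hr2def, ← Finset.sum_sub_distrib]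
    calc |∑ a, (μ₂ a - μ₁ a)| ≤ ∑ a, |μ₂ a - μ₁ a| := Finset.abs_sum_le_sum_abs _ _
      _ = ∑ a, |μ₁ a - μ₂ a| := by simp [abs_sub_comm]
  have key : ∀ a, |μ₁ a / r1 - μ₂ a / r2| ≤ |μ₁ a - μ₂ a| / m + μ₂ a * Smax / (m * r2) := by
    intro a
    have heq : μ₁ a / r1 - μ₂ a / r2 = (μ₁ a - μ₂ a) / r1 + μ₂ a * (r2 - r1) / (r1 * r2) := by
      field_simp
      ring
    rw [heq]
    calc |(μ₁ a - μ₂ a) / r1 + μ₂ a * (r2 - r1) / (r1 * r2)|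
        ≤ |(μ₁ a - μ₂ a) / r1| + |μ₂ a * (r2 - r1) / (r1 * r2)| := abs_add_le _ _
      _ = |μ₁ a - μ₂ a| / r1 + μ₂ a * |r2 - r1| / (r1 * r2) := by
          rw [abs_div, abs_div, abs_mul, abs_mul, abs_of_pos hr1, abs_of_pos hr2,
            abs_of_nonneg (h2nn a)]
      _ ≤ |μ₁ a - μ₂ a| / m + μ₂ a * Smax / (m * r2) := by
          refine add_le_add ?_ ?_
          · exact div_le_div_of_nonneg_left (abs_nonneg _) hm h1
          · exact div_le_div₀ (mul_nonneg (h2nn a) hSnn)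
              (mul_le_mul_of_nonneg_left hdiff (h2nn a)) (by positivity)
              (mul_le_mul_of_nonneg_right h1 hr2.le)
  calc ∑ a, |μ₁ a / r1 - μ₂ a / r2|
      ≤ ∑ a, (|μ₁ a - μ₂ a| / m + μ₂ a * Smax / (m * r2)) :=
        Finset.sum_le_sum fun a _ => key a
    _ = Smax / m + r2 * Smax / (m * r2) := by
        rw [Finset.sum_add_distrib, ← Finset.sum_div, ← hS]
        congr 1
        simp_rw [mul_div_assoc]
        rw [← Finset.sum_mul]
    _ = (2 / m) * Smax := by
        field_simp
        ring
    _ = (2 / m) * ∑ a, |μ₁ a - μ₂ a| := rfl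

/-- Lipschitz bound for the normalization map: if `ν(s) > 0` for all `s`
and `ν_min = min_s ν(s)`, then for any nonnegative `μ₁, μ₂ ∈ ℝ^{S×A}` with row sums
`Σ_a μ_j(s,a) ≥ ν(s)` for all `s`, one has
`‖π_{μ₁} − π_{μ₂}‖₂ ≤ (2/ν_min) ‖μ₁ − μ₂‖₁`. -/
theorem stmt5 {S A : Type*} [Fintype S] [Fintype A] [Nonempty S] [Nonempty A]
    (ν : S → ℝ) (hν : ∀ s, 0 < ν s)
    (μ₁ μ₂ : S → A → ℝ)
    (h1nn : ∀ s a, 0 ≤ μ₁ s a) (h2nn : ∀ s a, 0 ≤ μ₂ s a)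
    (h1row : ∀ s, ν s ≤ ∑ a, μ₁ s a) (h2row : ∀ s, ν s ≤ ∑ a, μ₂ s a) :
    Real.sqrt (∑ s, ∑ a, (normPol μ₁ s a - normPol μ₂ s a) ^ 2) ≤
      (2 / Finset.univ.inf' Finset.univ_nonempty ν) *
        ∑ s, ∑ a, |μ₁ s a - μ₂ s a| := by
  set m := Finset.univ.inf' Finset.univ_nonempty ν with hm
  have hmpos : 0 < m := by
    rw [hm, Finset.lt_inf'_iff]
    exact fun s _ => hν s
  have hmle : ∀ s, m ≤ ν s := fun s => Finset.inf'_le _ (Finset.mem_univ s)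
  have step1 : Real.sqrt (∑ s, ∑ a, (normPol μ₁ s a - normPol μ₂ s a) ^ 2) ≤
      ∑ s, ∑ a, |normPol μ₁ s a - normPol μ₂ s a| := by
    have := l2_le_l1 (fun p : S × A => normPol μ₁ p.1 p.2 - normPol μ₂ p.1 p.2)
    simpa [Fintype.sum_prod_type] using this
  refine step1.trans ?_
  rw [Finset.mul_sum]
  refine Finset.sum_le_sum fun s _ => ?_
  have := row_bound (μ₁ s) (μ₂ s) m hmpos (h2nn s)
    ((hmle s).trans (h1row s)) ((hmle s).trans (h2row s))
  simpa [normPol] using this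
end

section
/- Lipschitz continuity of the policy-to-occupation-measure map: for every transition kernel P there exists a constant L > 0 such that for all stationary policies π₁, π₂ ∈ Π, ‖μ_{π₁} − μ_{π₂}‖₂ ≤ L ‖π₁ − π₂‖₂, where ‖·‖₂ is the Euclidean norm on ℝ^{S×A}. -/
/-
Write `d_t = ν P_π^t` for the state distribution at time `t`, so that `ρ_π = ∑ γ^t d_t`.
Each step of the chain moves `d_t` by at most `∑_{s,s'} |P_{π₁}(s,s') - P_{π₂}(s,s')|
≤ ‖π₁ - π₂‖₁` in `ℓ¹` (stochastic matrices are `ℓ¹`-contractions), so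
`‖d_t^{π₁} - d_t^{π₂}‖₁ ≤ t ‖π₁ - π₂‖₁` and `|ρ_{π₁} - ρ_{π₂}| ≤ γ/(1-γ)² ‖π₁ - π₂‖₁`.
Together with `0 ≤ π ≤ 1` and `|ρ_π| ≤ 1/(1-γ)` this gives the entrywise bound
`|μ_{π₁} - μ_{π₂}| ≤ ‖π₁ - π₂‖₁ / (1-γ)²`, and comparing `ℓ¹`, `ℓ²` and `ℓ^∞` norms on
`ℝ^{S×A}` costs a factor `|S||A|`.
-/

open scoped BigOperators

variable {S A : Type*}

open Matrix Finset

section Stochastic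

variable {R n m : Type*} [Fintype n]

lemma abs_le_one_of_mem_stdSimplex [Ring R] [LinearOrder R] [IsOrderedRing R] {x : n → R}
    (hx : x ∈ stdSimplex R n) (i : n) : |x i| ≤ 1 := by
  rw [abs_of_nonneg (hx.1 i)]
  exact (mem_Icc_of_mem_stdSimplex hx i).2

lemma vecMul_mem_stdSimplex [DecidableEq n] [Semiring R] [PartialOrder R] [IsOrderedRing R]
    {x : n → R} {M : Matrix n n R} (hx : x ∈ stdSimplex R n)
    (hM : M ∈ rowStochastic R n) : x ᵥ* M ∈ stdSimplex R n := by
  refine ⟨nonneg_vecMul_of_mem_rowStochastic hM hx.1, ?_⟩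
  have := vecMul_dotProduct_one_eq_one_rowStochastic hM (x := x) (by rw [dotProduct_one, hx.2])
  rwa [dotProduct_one] at this

variable [CommRing R] [LinearOrder R] [IsStrictOrderedRing R]

lemma sum_abs_vecMul_le [Fintype m] (v : n → R) (E : Matrix n m R) :
    ∑ j, |(v ᵥ* E) j| ≤ ∑ i, ∑ j, |v i| * |E i j| := by
  calc ∑ j, |(v ᵥ* E) j| ≤ ∑ j, ∑ i, |v i * E i j| :=
        sum_le_sum fun j _ => abs_sum_le_sum_abs _ _
    _ = ∑ i, ∑ j, |v i| * |E i j| := by simp_rw [abs_mul]; exact sum_comm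

lemma sum_abs_vecMul_le_of_abs_le_one [Fintype m] {v : n → R} (hv : ∀ i, |v i| ≤ 1)
    (E : Matrix n m R) : ∑ j, |(v ᵥ* E) j| ≤ ∑ i, ∑ j, |E i j| :=
  (sum_abs_vecMul_le v E).trans <| sum_le_sum fun i _ => sum_le_sum fun _ _ =>
    mul_le_of_le_one_left (abs_nonneg _) (hv i)

variable [DecidableEq n]

lemma sum_abs_vecMul_le_of_mem_rowStochastic {M : Matrix n n R}
    (hM : M ∈ rowStochastic R n) (v : n → R) :
    ∑ j, |(v ᵥ* M) j| ≤ ∑ i, |v i| := by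
  refine (sum_abs_vecMul_le v M).trans_eq (sum_congr rfl fun i _ => ?_)
  simp_rw [abs_of_nonneg (nonneg_of_mem_rowStochastic hM), ← mul_sum,
    sum_row_of_mem_rowStochastic hM, mul_one]

lemma sum_abs_vecMul_sub_vecMul_le {x y : n → R} {A B : Matrix n n R}
    (hA : A ∈ rowStochastic R n) (hy : y ∈ stdSimplex R n) :
    ∑ j, |(x ᵥ* A) j - (y ᵥ* B) j| ≤ ∑ j, |x j - y j| + ∑ i, ∑ j, |A i j - B i j| := by
  have hsplit : x ᵥ* A - y ᵥ* B = (x - y) ᵥ* A + y ᵥ* (A - B) := by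
    rw [sub_vecMul, vecMul_sub]; abel
  calc ∑ j, |(x ᵥ* A) j - (y ᵥ* B) j|
      = ∑ j, |((x - y) ᵥ* A) j + (y ᵥ* (A - B)) j| := by
        simp_rw [← Pi.sub_apply (x ᵥ* A), hsplit, Pi.add_apply]
    _ ≤ ∑ j, |((x - y) ᵥ* A) j| + ∑ j, |(y ᵥ* (A - B)) j| := by
        rw [← sum_add_distrib]; exact sum_le_sum fun j _ => abs_add_le _ _
    _ ≤ ∑ j, |x j - y j| + ∑ i, ∑ j, |A i j - B i j| :=
        add_le_add (sum_abs_vecMul_le_of_mem_rowStochastic hA _)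
          (sum_abs_vecMul_le_of_abs_le_one (abs_le_one_of_mem_stdSimplex hy) _)

lemma sum_abs_vecMul_pow_sub_le {x : n → R} {A B : Matrix n n R}
    (hA : A ∈ rowStochastic R n) (hB : B ∈ rowStochastic R n) (hx : x ∈ stdSimplex R n)
    (t : ℕ) :
    ∑ j, |(x ᵥ* A ^ t) j - (x ᵥ* B ^ t) j| ≤ t * ∑ i, ∑ j, |A i j - B i j| := by
  induction t with
  | zero => simp
  | succ t ih =>
    rw [pow_succ, pow_succ, ← vecMul_vecMul, ← vecMul_vecMul]
    calc _ ≤ ∑ j, |(x ᵥ* A ^ t) j - (x ᵥ* B ^ t) j| + ∑ i, ∑ j, |A i j - B i j| :=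
          sum_abs_vecMul_sub_vecMul_le hA (vecMul_mem_stdSimplex hx (pow_mem hB t))
      _ ≤ t * ∑ i, ∑ j, |A i j - B i j| + ∑ i, ∑ j, |A i j - B i j| := by gcongr
      _ = (t + 1 : ℕ) * ∑ i, ∑ j, |A i j - B i j| := by push_cast; ring

end Stochastic

section Discounted

variable {γ : ℝ} (hγ0 : 0 ≤ γ)
include hγ0

lemma norm_pow_mul_le_pow {f : ℕ → ℝ} (hf : ∀ t, |f t| ≤ 1) (t : ℕ) :
    ‖γ ^ t * f t‖ ≤ γ ^ t := by
  rw [Real.norm_eq_abs, abs_mul, abs_of_nonneg (pow_nonneg hγ0 t)]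
  exact mul_le_of_le_one_right (pow_nonneg hγ0 t) (hf t)

variable (hγ1 : γ < 1)
include hγ1

lemma summable_pow_mul_of_abs_le_one {f : ℕ → ℝ} (hf : ∀ t, |f t| ≤ 1) :
    Summable fun t => γ ^ t * f t :=
  (summable_geometric_of_lt_one hγ0 hγ1).of_norm_bounded (norm_pow_mul_le_pow hγ0 hf)

lemma abs_tsum_pow_mul_le {f : ℕ → ℝ} (hf : ∀ t, |f t| ≤ 1) :
    |∑' t, γ ^ t * f t| ≤ (1 - γ)⁻¹ :=
  (Real.norm_eq_abs _).symm.trans_le <|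
    tsum_of_norm_bounded (hasSum_geometric_of_lt_one hγ0 hγ1) (norm_pow_mul_le_pow hγ0 hf)

lemma abs_tsum_pow_mul_sub_le {f g : ℕ → ℝ} {c : ℝ} (hf : ∀ t, |f t| ≤ 1)
    (hg : ∀ t, |g t| ≤ 1) (hfg : ∀ t, |f t - g t| ≤ t * c) :
    |∑' t, γ ^ t * f t - ∑' t, γ ^ t * g t| ≤ γ / (1 - γ) ^ 2 * c := by
  rw [← (summable_pow_mul_of_abs_le_one hγ0 hγ1 hf).tsum_sub
    (summable_pow_mul_of_abs_le_one hγ0 hγ1 hg)]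
  have hγ : ‖γ‖ < 1 := by rwa [Real.norm_eq_abs, abs_of_nonneg hγ0]
  refine (Real.norm_eq_abs _).symm.trans_le <|
    tsum_of_norm_bounded ((hasSum_coe_mul_geometric_of_norm_lt_one hγ).mul_right c) fun t => ?_
  rw [Real.norm_eq_abs, ← mul_sub, abs_mul, abs_of_nonneg (pow_nonneg hγ0 t)]
  calc γ ^ t * |f t - g t| ≤ γ ^ t * (t * c) := by gcongr; exact hfg t
    _ = t * γ ^ t * c := by ring

end Discounted

section OccupationMeasure

variable [Fintype S] [Fintype A] {P : S × A → S → ℝ}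

lemma sum_abs_polMatrix_sub_le (hP : IsKernel P) (π₁ π₂ : S → A → ℝ) :
    ∑ s, ∑ s', |polMatrix P π₁ s s' - polMatrix P π₂ s s'| ≤
      ∑ s, ∑ a, |π₁ s a - π₂ s a| := by
  refine sum_le_sum fun s _ => ?_
  calc ∑ s', |polMatrix P π₁ s s' - polMatrix P π₂ s s'|
      = ∑ s', |∑ a, (π₁ s a - π₂ s a) * P (s, a) s'| := by
        simp only [polMatrix, of_apply, ← sum_sub_distrib, sub_mul]
    _ ≤ ∑ s', ∑ a, |π₁ s a - π₂ s a| * P (s, a) s' :=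
        sum_le_sum fun s' _ => (abs_sum_le_sum_abs _ _).trans_eq <|
          sum_congr rfl fun a _ => by rw [abs_mul, abs_of_nonneg (hP.1 _ _)]
    _ = ∑ a, |π₁ s a - π₂ s a| := by
        rw [sum_comm]; simp_rw [← mul_sum, hP.2, mul_one]

variable [DecidableEq S]

lemma polMatrix_mem_rowStochastic (hP : IsKernel P) {π : S → A → ℝ} (hπ : IsPolicy π) :
    polMatrix P π ∈ rowStochastic ℝ S := by
  refine mem_rowStochastic_iff_sum.2 ⟨fun s s' => ?_, fun s => ?_⟩
  · exact sum_nonneg fun a _ => mul_nonneg (hπ.1 s a) (hP.1 _ _)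
  · simp only [polMatrix, of_apply]
    rw [sum_comm]
    simp_rw [← mul_sum, hP.2, mul_one]
    exact hπ.2 s

lemma stateDist_eq (γ : ℝ) (ν : S → ℝ) (P : S × A → S → ℝ) (π : S → A → ℝ) (s : S) :
    stateDist γ ν P π s = ∑' t, γ ^ t * (ν ᵥ* polMatrix P π ^ t) s := by
  simp only [stateDist, ← transpose_pow, mulVec_transpose]

variable {ν : S → ℝ} (hν : IsInitDist ν) (hP : IsKernel P)
include hν hP

lemma abs_vecMul_polMatrix_pow_le_one {π : S → A → ℝ} (hπ : IsPolicy π) (t : ℕ) (s : S) :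
    |(ν ᵥ* polMatrix P π ^ t) s| ≤ 1 :=
  abs_le_one_of_mem_stdSimplex
    (vecMul_mem_stdSimplex hν (pow_mem (polMatrix_mem_rowStochastic hP hπ) t)) s

variable {γ : ℝ} (hγ0 : 0 ≤ γ) (hγ1 : γ < 1)
include hγ0 hγ1

lemma abs_stateDist_le {π : S → A → ℝ} (hπ : IsPolicy π) (s : S) :
    |stateDist γ ν P π s| ≤ (1 - γ)⁻¹ := by
  rw [stateDist_eq]
  exact abs_tsum_pow_mul_le hγ0 hγ1 fun t => abs_vecMul_polMatrix_pow_le_one hν hP hπ t s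

lemma abs_stateDist_sub_le {π₁ π₂ : S → A → ℝ} (hπ₁ : IsPolicy π₁) (hπ₂ : IsPolicy π₂)
    (s : S) :
    |stateDist γ ν P π₁ s - stateDist γ ν P π₂ s| ≤
      γ / (1 - γ) ^ 2 * ∑ s, ∑ a, |π₁ s a - π₂ s a| := by
  rw [stateDist_eq, stateDist_eq]
  refine abs_tsum_pow_mul_sub_le hγ0 hγ1 (fun t => abs_vecMul_polMatrix_pow_le_one hν hP hπ₁ t s)
    (fun t => abs_vecMul_polMatrix_pow_le_one hν hP hπ₂ t s) fun t => ?_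
  calc |(ν ᵥ* polMatrix P π₁ ^ t) s - (ν ᵥ* polMatrix P π₂ ^ t) s|
      ≤ ∑ s', |(ν ᵥ* polMatrix P π₁ ^ t) s' - (ν ᵥ* polMatrix P π₂ ^ t) s'| :=
        single_le_sum (f := fun s' => |_ - _|) (fun _ _ => abs_nonneg _) (mem_univ s)
    _ ≤ t * ∑ s, ∑ s', |polMatrix P π₁ s s' - polMatrix P π₂ s s'| :=
        sum_abs_vecMul_pow_sub_le (polMatrix_mem_rowStochastic hP hπ₁)
          (polMatrix_mem_rowStochastic hP hπ₂) hν t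
    _ ≤ t * ∑ s, ∑ a, |π₁ s a - π₂ s a| :=
        mul_le_mul_of_nonneg_left (sum_abs_polMatrix_sub_le hP π₁ π₂) t.cast_nonneg

lemma abs_occ_sub_le {π₁ π₂ : S → A → ℝ} (hπ₁ : IsPolicy π₁) (hπ₂ : IsPolicy π₂)
    (s : S) (a : A) :
    |occ γ ν P π₁ s a - occ γ ν P π₂ s a| ≤
      ((1 - γ) ^ 2)⁻¹ * ∑ s, ∑ a, |π₁ s a - π₂ s a| := by
  set D := ∑ s, ∑ a, |π₁ s a - π₂ s a|
  have hπD : |π₁ s a - π₂ s a| ≤ D :=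
    (single_le_sum (f := fun a => |π₁ s a - π₂ s a|) (fun _ _ => abs_nonneg _) (mem_univ a)).trans
      (single_le_sum (f := fun s => ∑ a, |π₁ s a - π₂ s a|)
        (fun _ _ => sum_nonneg fun _ _ => abs_nonneg _) (mem_univ s))
  have hπ₂1 : |π₂ s a| ≤ 1 := abs_le_one_of_mem_stdSimplex ⟨hπ₂.1 s, hπ₂.2 s⟩ a
  have hsplit : occ γ ν P π₁ s a - occ γ ν P π₂ s a =
      (π₁ s a - π₂ s a) * stateDist γ ν P π₁ s +
        π₂ s a * (stateDist γ ν P π₁ s - stateDist γ ν P π₂ s) := by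
    simp only [occ]; ring
  have h1γ : 0 < 1 - γ := sub_pos.2 hγ1
  calc |occ γ ν P π₁ s a - occ γ ν P π₂ s a|
      ≤ |π₁ s a - π₂ s a| * |stateDist γ ν P π₁ s| +
          |π₂ s a| * |stateDist γ ν P π₁ s - stateDist γ ν P π₂ s| := by
        rw [hsplit, ← abs_mul, ← abs_mul]; exact abs_add_le _ _
    _ ≤ D * (1 - γ)⁻¹ + 1 * (γ / (1 - γ) ^ 2 * D) := by
        gcongr
        · exact abs_stateDist_le hν hP hγ0 hγ1 hπ₁ s
        · exact abs_stateDist_sub_le hν hP hγ0 hγ1 hπ₁ hπ₂ s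
    _ = ((1 - γ) ^ 2)⁻¹ * D := by field_simp; ring

end OccupationMeasure

section EuclideanNorm

variable {ι : Type*} [Fintype ι]

lemma sqrt_sum_sq_le_sqrt_card_mul {x : ι → ℝ} {b : ℝ} (hb : 0 ≤ b) (hx : ∀ i, |x i| ≤ b) :
    √(∑ i, x i ^ 2) ≤ √(Fintype.card ι) * b := by
  rw [← Real.sqrt_sq hb, ← Real.sqrt_mul (Nat.cast_nonneg _)]
  refine Real.sqrt_le_sqrt ?_
  calc ∑ i, x i ^ 2 ≤ ∑ _i : ι, b ^ 2 :=
        sum_le_sum fun i _ => sq_le_sq.2 ((hx i).trans_eq (abs_of_nonneg hb).symm)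
    _ = Fintype.card ι * b ^ 2 := by simp

lemma sum_abs_le_sqrt_card_mul_sqrt_sum_sq (x : ι → ℝ) :
    ∑ i, |x i| ≤ √(Fintype.card ι) * √(∑ i, x i ^ 2) := by
  rw [← Real.sqrt_mul (Nat.cast_nonneg _)]
  refine Real.le_sqrt_of_sq_le ?_
  simpa only [sq_abs, card_univ] using sq_sum_le_card_mul_sum_sq (s := univ) (f := fun i => |x i|)

end EuclideanNorm

/-- Lipschitz continuity of the policy-to-occupation-measure map:
for every transition kernel `P` there exists `L > 0` such that for all stationary
policies `π₁, π₂`, `‖μ_{π₁} − μ_{π₂}‖₂ ≤ L ‖π₁ − π₂‖₂` (Euclidean norms on `ℝ^{S×A}`). -/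
theorem stmt6 [Fintype S] [Fintype A] [Nonempty S] [Nonempty A] [DecidableEq S]
    (γ : ℝ) (hγ : γ ∈ Set.Ioo (0 : ℝ) 1)
    (ν : S → ℝ) (hν : IsInitDist ν)
    (P : S × A → S → ℝ) (hP : IsKernel P) :
    ∃ L > 0, ∀ π₁ π₂ : S → A → ℝ, IsPolicy π₁ → IsPolicy π₂ →
      Real.sqrt (∑ s, ∑ a, (occ γ ν P π₁ s a - occ γ ν P π₂ s a) ^ 2) ≤
        L * Real.sqrt (∑ s, ∑ a, (π₁ s a - π₂ s a) ^ 2) := by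
  obtain ⟨hγ0, hγ1⟩ := hγ
  have hN : 0 < (Fintype.card (S × A) : ℝ) := Nat.cast_pos.2 Fintype.card_pos
  refine ⟨Fintype.card (S × A) * ((1 - γ) ^ 2)⁻¹, by have := sub_pos.2 hγ1; positivity,
    fun π₁ π₂ hπ₁ hπ₂ => ?_⟩
  have hμ := sqrt_sum_sq_le_sqrt_card_mul (by positivity)
    fun p : S × A => abs_occ_sub_le hν hP hγ0.le hγ1 hπ₁ hπ₂ p.1 p.2
  have hπ := sum_abs_le_sqrt_card_mul_sqrt_sum_sq fun p : S × A => π₁ p.1 p.2 - π₂ p.1 p.2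
  simp only [Fintype.sum_prod_type] at hμ hπ
  calc _ ≤ √(Fintype.card (S × A)) * (((1 - γ) ^ 2)⁻¹ * ∑ s, ∑ a, |π₁ s a - π₂ s a|) := hμ
    _ ≤ √(Fintype.card (S × A)) * (((1 - γ) ^ 2)⁻¹ *
          (√(Fintype.card (S × A)) * √(∑ s, ∑ a, (π₁ s a - π₂ s a) ^ 2))) := by gcongr
    _ = _ := by
        linear_combination ((1 - γ) ^ 2)⁻¹ * √(∑ s, ∑ a, (π₁ s a - π₂ s a) ^ 2) *
          Real.mul_self_sqrt hN.le
end

section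
/- Sensitivity of the performance function with respect to policies: assume every column ψ_j of the cost-basis matrix Ψ ∈ ℝ^{(S×A)×n_c} satisfies ‖ψ_j‖_∞ ≤ 1, and assume that for each environment i ∈ {1,…,N} the map π ↦ μ^i_π is L_i-Lipschitz from (Π, ‖·‖₂) to (ℝ^{S×A}, ‖·‖₂); set L := max_{i} L_i. Then for all π₁, π₂ ∈ Π and all β in the simplex Δ_N, |V_β(π₁) − V_β(π₂)| ≤ n_c · L · √(|S||A|) · ‖π₁ − π₂‖₂. -/
open scoped BigOperators

variable {S A : Type*}

/-- Performance function `V_β(π) = Σ_i β_i ‖Ψᵀ μ^i_π − Ψᵀ μ^i_{π^{E_i}}‖₁`. -/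
noncomputable def perf {N nc : ℕ} [Fintype S] [Fintype A] [DecidableEq S]
    (γ : ℝ) (ν : S → ℝ) (P : Fin N → S × A → S → ℝ)
    (πE : Fin N → S → A → ℝ) (Ψ : S × A → Fin nc → ℝ) (β : Fin N → ℝ)
    (π : S → A → ℝ) : ℝ :=
  ∑ i, β i *
    ∑ j, |∑ p : S × A, Ψ p j *
      (occ γ ν (P i) π p.1 p.2 - occ γ ν (P i) (πE i) p.1 p.2)|

/-- ℓ1 norm is at most `√card` times the ℓ2 norm. -/
lemma l1_le_sqrt_card_mul_l2 {ι : Type*} [Fintype ι] (f : ι → ℝ) :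
    ∑ i, |f i| ≤ Real.sqrt (Fintype.card ι) * Real.sqrt (∑ i, f i ^ 2) := by
  have h1 : (∑ i, |f i|) ^ 2 ≤ (Fintype.card ι : ℝ) * ∑ i, |f i| ^ 2 := by
    simpa using sq_sum_le_card_mul_sum_sq (s := Finset.univ) (f := fun i => |f i|)
  have h2 : (∑ i, |f i| ^ 2) = ∑ i, f i ^ 2 := by
    simp [sq_abs]
  calc ∑ i, |f i| = Real.sqrt ((∑ i, |f i|) ^ 2) := by
        rw [Real.sqrt_sq (Finset.sum_nonneg fun i _ => abs_nonneg _)]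
    _ ≤ Real.sqrt ((Fintype.card ι : ℝ) * ∑ i, f i ^ 2) := by
        apply Real.sqrt_le_sqrt; rw [← h2]; exact h1
    _ = Real.sqrt (Fintype.card ι) * Real.sqrt (∑ i, f i ^ 2) := Real.sqrt_mul (by positivity) _

/-- sensitivity of the performance function with respect to policies:
if every column of `Ψ` has sup-norm at most `1`, and for each environment `i` the map
`π ↦ μ^i_π` is `L i`-Lipschitz from `(Π, ‖·‖₂)` to `(ℝ^{S×A}, ‖·‖₂)`, then with
`L* = max_i L i` one has, for all `π₁, π₂ ∈ Π` and `β` in the simplex,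
`|V_β(π₁) − V_β(π₂)| ≤ n_c · L* · √(|S||A|) · ‖π₁ − π₂‖₂`. -/
theorem stmt7 [Fintype S] [Fintype A] [Nonempty S] [Nonempty A] [DecidableEq S]
    {N nc : ℕ} (hN : 0 < N)
    (γ : ℝ) (hγ : γ ∈ Set.Ioo (0 : ℝ) 1)
    (ν : S → ℝ) (hν : IsInitDist ν)
    (P : Fin N → S × A → S → ℝ) (hP : ∀ i, IsKernel (P i))
    (πE : Fin N → S → A → ℝ) (hπE : ∀ i, IsPolicy (πE i))
    (Ψ : S × A → Fin nc → ℝ) (hΨ : ∀ j p, |Ψ p j| ≤ 1)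
    (L : Fin N → ℝ)
    (hL : ∀ i, ∀ π₁ π₂ : S → A → ℝ, IsPolicy π₁ → IsPolicy π₂ →
      Real.sqrt (∑ s, ∑ a, (occ γ ν (P i) π₁ s a - occ γ ν (P i) π₂ s a) ^ 2) ≤
        L i * Real.sqrt (∑ s, ∑ a, (π₁ s a - π₂ s a) ^ 2))
    (β : Fin N → ℝ) (hβnn : ∀ i, 0 ≤ β i) (hβ1 : ∑ i, β i = 1)
    (π₁ π₂ : S → A → ℝ) (h1 : IsPolicy π₁) (h2 : IsPolicy π₂) :
    |perf γ ν P πE Ψ β π₁ - perf γ ν P πE Ψ β π₂| ≤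
      (nc : ℝ) * (⨆ i, L i) *
        Real.sqrt ((Fintype.card S : ℝ) * (Fintype.card A : ℝ)) *
        Real.sqrt (∑ s, ∑ a, (π₁ s a - π₂ s a) ^ 2) := by
  set D := Real.sqrt (∑ s, ∑ a, (π₁ s a - π₂ s a) ^ 2) with hDdef
  have hD0 : 0 ≤ D := Real.sqrt_nonneg _
  set C := Real.sqrt ((Fintype.card S : ℝ) * (Fintype.card A : ℝ)) with hCdef
  have hC0 : 0 ≤ C := Real.sqrt_nonneg _
  have hLmax : ∀ i, L i ≤ ⨆ i, L i := fun i =>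
    le_ciSup (Set.Finite.bddAbove (Set.finite_range L)) i
  have key : ∀ i : Fin N,
      |(∑ j, |∑ p : S × A, Ψ p j *
          (occ γ ν (P i) π₁ p.1 p.2 - occ γ ν (P i) (πE i) p.1 p.2)|) -
       (∑ j, |∑ p : S × A, Ψ p j *
          (occ γ ν (P i) π₂ p.1 p.2 - occ γ ν (P i) (πE i) p.1 p.2)|)| ≤
      (nc : ℝ) * (⨆ i, L i) * C * D := by
    intro i
    set Δ : S × A → ℝ := fun p => occ γ ν (P i) π₁ p.1 p.2 - occ γ ν (P i) π₂ p.1 p.2 with hΔ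
    have hsum : Real.sqrt (∑ p : S × A, Δ p ^ 2) ≤ L i * D := by
      rw [Fintype.sum_prod_type (f := fun p => Δ p ^ 2)]
      exact hL i π₁ π₂ h1 h2
    have hl1 : ∑ p : S × A, |Δ p| ≤ C * (L i * D) := by
      calc ∑ p : S × A, |Δ p| ≤
          Real.sqrt (Fintype.card (S × A)) * Real.sqrt (∑ p : S × A, Δ p ^ 2) :=
            l1_le_sqrt_card_mul_l2 Δ
        _ ≤ C * (L i * D) := by
            have hcard : (Fintype.card (S × A) : ℝ) =
                (Fintype.card S : ℝ) * (Fintype.card A : ℝ) := by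
              rw [Fintype.card_prod]; push_cast; ring
            rw [hcard, ← hCdef]
            exact mul_le_mul_of_nonneg_left hsum hC0
    calc |(∑ j, |∑ p : S × A, Ψ p j *
          (occ γ ν (P i) π₁ p.1 p.2 - occ γ ν (P i) (πE i) p.1 p.2)|) -
       (∑ j, |∑ p : S × A, Ψ p j *
          (occ γ ν (P i) π₂ p.1 p.2 - occ γ ν (P i) (πE i) p.1 p.2)|)|
        = |∑ j, ((|∑ p : S × A, Ψ p j *
          (occ γ ν (P i) π₁ p.1 p.2 - occ γ ν (P i) (πE i) p.1 p.2)|) -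
          (|∑ p : S × A, Ψ p j *
          (occ γ ν (P i) π₂ p.1 p.2 - occ γ ν (P i) (πE i) p.1 p.2)|))| := by
          rw [Finset.sum_sub_distrib]
      _ ≤ ∑ j, |(|∑ p : S × A, Ψ p j *
          (occ γ ν (P i) π₁ p.1 p.2 - occ γ ν (P i) (πE i) p.1 p.2)|) -
          (|∑ p : S × A, Ψ p j *
          (occ γ ν (P i) π₂ p.1 p.2 - occ γ ν (P i) (πE i) p.1 p.2)|)| :=
          Finset.abs_sum_le_sum_abs _ _
      _ ≤ ∑ j : Fin nc, |∑ p : S × A, Ψ p j * Δ p| := by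
          apply Finset.sum_le_sum
          intro j _
          calc _ ≤ |(∑ p : S × A, Ψ p j *
                (occ γ ν (P i) π₁ p.1 p.2 - occ γ ν (P i) (πE i) p.1 p.2)) -
              (∑ p : S × A, Ψ p j *
                (occ γ ν (P i) π₂ p.1 p.2 - occ γ ν (P i) (πE i) p.1 p.2))| :=
              abs_abs_sub_abs_le_abs_sub _ _
            _ = |∑ p : S × A, Ψ p j * Δ p| := by
              rw [← Finset.sum_sub_distrib]
              congr 1
              apply Finset.sum_congr rfl
              intro p _
              simp only [hΔ]; ring
      _ ≤ ∑ j : Fin nc, ∑ p : S × A, |Δ p| := by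
          apply Finset.sum_le_sum
          intro j _
          calc |∑ p : S × A, Ψ p j * Δ p| ≤ ∑ p : S × A, |Ψ p j * Δ p| :=
              Finset.abs_sum_le_sum_abs _ _
            _ ≤ ∑ p : S × A, |Δ p| := by
              apply Finset.sum_le_sum
              intro p _
              rw [abs_mul]
              exact mul_le_of_le_one_left (abs_nonneg _) (hΨ j p)
      _ = (nc : ℝ) * ∑ p : S × A, |Δ p| := by simp
      _ ≤ (nc : ℝ) * (C * (L i * D)) :=
          mul_le_mul_of_nonneg_left hl1 (Nat.cast_nonneg _)
      _ ≤ (nc : ℝ) * (C * ((⨆ i, L i) * D)) := by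
          have h1' : L i * D ≤ (⨆ i, L i) * D := mul_le_mul_of_nonneg_right (hLmax i) hD0
          exact mul_le_mul_of_nonneg_left (mul_le_mul_of_nonneg_left h1' hC0)
            (Nat.cast_nonneg _)
      _ = (nc : ℝ) * (⨆ i, L i) * C * D := by ring
  calc |perf γ ν P πE Ψ β π₁ - perf γ ν P πE Ψ β π₂|
      = |∑ i, β i * ((∑ j, |∑ p : S × A, Ψ p j *
          (occ γ ν (P i) π₁ p.1 p.2 - occ γ ν (P i) (πE i) p.1 p.2)|) -
        (∑ j, |∑ p : S × A, Ψ p j *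
          (occ γ ν (P i) π₂ p.1 p.2 - occ γ ν (P i) (πE i) p.1 p.2)|))| := by
        unfold perf
        rw [← Finset.sum_sub_distrib]
        congr 1
        apply Finset.sum_congr rfl
        intro i _
        ring
    _ ≤ ∑ i, |β i * ((∑ j, |∑ p : S × A, Ψ p j *
          (occ γ ν (P i) π₁ p.1 p.2 - occ γ ν (P i) (πE i) p.1 p.2)|) -
        (∑ j, |∑ p : S × A, Ψ p j *
          (occ γ ν (P i) π₂ p.1 p.2 - occ γ ν (P i) (πE i) p.1 p.2)|))| :=
        Finset.abs_sum_le_sum_abs _ _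
    _ ≤ ∑ i, β i * ((nc : ℝ) * (⨆ i, L i) * C * D) := by
        apply Finset.sum_le_sum
        intro i _
        rw [abs_mul, abs_of_nonneg (hβnn i)]
        exact mul_le_mul_of_nonneg_left (key i) (hβnn i)
    _ = (nc : ℝ) * (⨆ i, L i) * C * D := by
        rw [← Finset.sum_mul, hβ1, one_mul]
end

section
/- Specific performance (sandwich inequality): fix ε ≥ 0 and an environment i ∈ {1,…,N}. For every decoupled optimizer π^dec_i ∈ S^dec_i and every CAL optimizer (π*_1,…,π*_N,π*_c) ∈ S^CAL(ε), one has V_{e_i}(π^dec_i) ≤ V_{e_i}(π*_i) ≤ V_{e_i}(π*_c), where V_{e_i}(π) := ‖Ψᵀ μ^i_π − Ψᵀ μ^i_{π^{E_i}}‖₁. -/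
open scoped BigOperators

variable {S A : Type*}

/-- `‖Ψᵀ μ^i_π − Ψᵀ μ^i_{π^{E_i}}‖₁`: the worst-case cost discrepancy of policy `π`
with respect to the expert in environment `i`. -/
noncomputable def discrep {N nc : ℕ} [Fintype S] [Fintype A] [DecidableEq S]
    (γ : ℝ) (ν : S → ℝ) (P : Fin N → S × A → S → ℝ)
    (πE : Fin N → S → A → ℝ) (Ψ : S × A → Fin nc → ℝ)
    (i : Fin N) (π : S → A → ℝ) : ℝ :=
  ∑ j, |∑ p : S × A, Ψ p j *
    (occ γ ν (P i) π p.1 p.2 - occ γ ν (P i) (πE i) p.1 p.2)|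

/-- The CAL objective `Σ_i ‖Ψᵀ μ^i_{π_i} − Ψᵀ μ^i_{π^{E_i}}‖₁`. -/
noncomputable def calObj {N nc : ℕ} [Fintype S] [Fintype A] [DecidableEq S]
    (γ : ℝ) (ν : S → ℝ) (P : Fin N → S × A → S → ℝ)
    (πE : Fin N → S → A → ℝ) (Ψ : S × A → Fin nc → ℝ)
    (q : (Fin N → S → A → ℝ) × (S → A → ℝ)) : ℝ :=
  ∑ i, discrep γ ν P πE Ψ i (q.1 i)

/-- The CAL feasibility set `Φ(ε)`: tuples `(π_1,…,π_N,π_c)` of stationary policies with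
`max_{(s,a)} |π_i(s,a) − π_c(s,a)| ≤ ε` for all `i`. -/
def calFeas {N : ℕ} [Fintype A] (ε : ℝ) :
    Set ((Fin N → S → A → ℝ) × (S → A → ℝ)) :=
  {q | (∀ i, IsPolicy (q.1 i)) ∧ IsPolicy q.2 ∧
    ∀ i s a, |q.1 i s a - q.2 s a| ≤ ε}

/-- The CAL optimizer set `S^CAL(ε)`. -/
noncomputable def SCAL {N nc : ℕ} [Fintype S] [Fintype A] [DecidableEq S]
    (γ : ℝ) (ν : S → ℝ) (P : Fin N → S × A → S → ℝ)
    (πE : Fin N → S → A → ℝ) (Ψ : S × A → Fin nc → ℝ) (ε : ℝ) :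
    Set ((Fin N → S → A → ℝ) × (S → A → ℝ)) :=
  {q | q ∈ calFeas ε ∧ ∀ q' ∈ calFeas ε,
    calObj γ ν P πE Ψ q ≤ calObj γ ν P πE Ψ q'}

/-- The decoupled optimizer set `S^dec_i`. -/
noncomputable def Sdec {N nc : ℕ} [Fintype S] [Fintype A] [DecidableEq S]
    (γ : ℝ) (ν : S → ℝ) (P : Fin N → S × A → S → ℝ)
    (πE : Fin N → S → A → ℝ) (Ψ : S × A → Fin nc → ℝ) (i : Fin N) :
    Set (S → A → ℝ) :=
  {π | IsPolicy π ∧ ∀ π', IsPolicy π' →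
    discrep γ ν P πE Ψ i π ≤ discrep γ ν P πE Ψ i π'}

/-- The centralized optimizer set `S^cen`. -/
noncomputable def Scen {N nc : ℕ} [Fintype S] [Fintype A] [DecidableEq S]
    (γ : ℝ) (ν : S → ℝ) (P : Fin N → S × A → S → ℝ)
    (πE : Fin N → S → A → ℝ) (Ψ : S × A → Fin nc → ℝ) :
    Set (S → A → ℝ) :=
  {π | IsPolicy π ∧ ∀ π', IsPolicy π' →
    (∑ i, discrep γ ν P πE Ψ i π) ≤ ∑ i, discrep γ ν P πE Ψ i π'}

/-- specific performance, sandwich inequality: for `ε ≥ 0`, environment `i`,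
any decoupled optimizer `π^dec ∈ S^dec_i` and any CAL optimizer `(π*_1,…,π*_N,π*_c) ∈ S^CAL(ε)`,
`V_{e_i}(π^dec) ≤ V_{e_i}(π*_i) ≤ V_{e_i}(π*_c)`. -/
theorem stmt9 [Fintype S] [Fintype A] [Nonempty S] [Nonempty A] [DecidableEq S]
    {N nc : ℕ}
    (γ : ℝ) (hγ : γ ∈ Set.Ioo (0 : ℝ) 1)
    (ν : S → ℝ) (hν : IsInitDist ν)
    (P : Fin N → S × A → S → ℝ) (hP : ∀ i, IsKernel (P i))
    (πE : Fin N → S → A → ℝ) (hπE : ∀ i, IsPolicy (πE i))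
    (Ψ : S × A → Fin nc → ℝ)
    (ε : ℝ) (hε : 0 ≤ ε) (i : Fin N)
    (πdec : S → A → ℝ) (hdec : πdec ∈ Sdec γ ν P πE Ψ i)
    (q : (Fin N → S → A → ℝ) × (S → A → ℝ)) (hq : q ∈ SCAL γ ν P πE Ψ ε) :
    discrep γ ν P πE Ψ i πdec ≤ discrep γ ν P πE Ψ i (q.1 i) ∧
      discrep γ ν P πE Ψ i (q.1 i) ≤ discrep γ ν P πE Ψ i q.2 := by
  obtain ⟨⟨h1, h2, h3⟩, hopt⟩ := hq
  constructor
  · exact hdec.2 _ (h1 i)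
  · -- compare q with q' replacing component i by q.2
    have hfeas : (Function.update q.1 i q.2, q.2) ∈ calFeas (N := N) ε := by
      refine ⟨fun j => ?_, h2, fun j s a => ?_⟩
      · by_cases hj : j = i
        · subst hj; simpa using h2
        · simpa [Function.update_of_ne hj] using h1 j
      · by_cases hj : j = i
        · subst hj; simpa using hε
        · simpa [Function.update_of_ne hj] using h3 j s a
    have := hopt _ hfeas
    unfold calObj at this
    simp only at this
    have heq : ∀ j ∈ Finset.univ \ {i},
        discrep γ ν P πE Ψ j (Function.update q.1 i q.2 j)
          = discrep γ ν P πE Ψ j (q.1 j) := by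
      intro j hj
      rw [Function.update_of_ne (by simpa using (Finset.mem_sdiff.mp hj).2)]
    rw [← Finset.sum_sdiff (Finset.subset_univ {i}), ← Finset.sum_sdiff (Finset.subset_univ {i}),
        Finset.sum_congr rfl heq] at this
    simpa using le_of_add_le_add_left this
end

section
/- Specific performance (cross inequality): fix ε ≥ 0 and environments i, j ∈ {1,…,N} with j ≠ i. For every CAL optimizer (π*_1,…,π*_N,π*_c) ∈ S^CAL(ε), one has V_{e_i}(π*_i) ≤ V_{e_i}(π*_j), where V_{e_i}(π) := ‖Ψᵀ μ^i_π − Ψᵀ μ^i_{π^{E_i}}‖₁. -/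
open scoped BigOperators

variable {S A : Type*}

/- Replacing `π*_i` by `π*_j` keeps the tuple in `Φ(ε)` and changes the CAL objective only in
its `i`-th summand, so optimality of `π*` forces `V_{e_i}(π*_i) ≤ V_{e_i}(π*_j)`. -/

theorem update_fst_mem_calFeas [Fintype A] {N : ℕ} {ε : ℝ}
    {q : (Fin N → S → A → ℝ) × (S → A → ℝ)} (hq : q ∈ calFeas ε) (i j : Fin N) :
    (Function.update q.1 i (q.1 j), q.2) ∈ calFeas ε := by
  obtain ⟨hpol, hpc, hcons⟩ := hq
  refine ⟨?_, hpc, ?_⟩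
  · exact (Function.forall_update_iff _ (p := fun _ (π : S → A → ℝ) => IsPolicy π)).2
      ⟨hpol j, fun k _ => hpol k⟩
  · exact (Function.forall_update_iff _
      (p := fun _ (π : S → A → ℝ) => ∀ s a, |π s a - q.2 s a| ≤ ε)).2
      ⟨hcons j, fun k _ => hcons k⟩

theorem calObj_update_add [Fintype S] [Fintype A] [DecidableEq S] {N nc : ℕ}
    (γ : ℝ) (ν : S → ℝ) (P : Fin N → S × A → S → ℝ)
    (πE : Fin N → S → A → ℝ) (Ψ : S × A → Fin nc → ℝ)
    (q : (Fin N → S → A → ℝ) × (S → A → ℝ)) (i : Fin N) (π : S → A → ℝ) :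
    calObj γ ν P πE Ψ (Function.update q.1 i π, q.2) + discrep γ ν P πE Ψ i (q.1 i) =
      calObj γ ν P πE Ψ q + discrep γ ν P πE Ψ i π := by
  simp only [calObj, Function.apply_update (discrep γ ν P πE Ψ),
    Finset.sum_update_of_mem (Finset.mem_univ i),
    Finset.sum_eq_add_sum_sdiff_singleton_of_mem (Finset.mem_univ i)
      (fun k => discrep γ ν P πE Ψ k (q.1 k))]
  ring

theorem stmt10_general [Fintype S] [Fintype A] [DecidableEq S]
    {N nc : ℕ}
    (γ : ℝ)
    (ν : S → ℝ)
    (P : Fin N → S × A → S → ℝ)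
    (πE : Fin N → S → A → ℝ)
    (Ψ : S × A → Fin nc → ℝ)
    (ε : ℝ) (i j : Fin N)
    (q : (Fin N → S → A → ℝ) × (S → A → ℝ)) (hq : q ∈ SCAL γ ν P πE Ψ ε) :
    discrep γ ν P πE Ψ i (q.1 i) ≤ discrep γ ν P πE Ψ i (q.1 j) := by
  obtain ⟨hfeas, hopt⟩ := hq
  have hswap := hopt _ (update_fst_mem_calFeas hfeas i j)
  have hobj := calObj_update_add γ ν P πE Ψ q i (q.1 j)
  linarith

/-- specific performance, cross inequality: for `ε ≥ 0` and environments
`i ≠ j`, any CAL optimizer `(π*_1,…,π*_N,π*_c) ∈ S^CAL(ε)` satisfies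
`V_{e_i}(π*_i) ≤ V_{e_i}(π*_j)`. -/
theorem stmt10 [Fintype S] [Fintype A] [Nonempty S] [Nonempty A] [DecidableEq S]
    {N nc : ℕ}
    (γ : ℝ) (hγ : γ ∈ Set.Ioo (0 : ℝ) 1)
    (ν : S → ℝ) (hν : IsInitDist ν)
    (P : Fin N → S × A → S → ℝ) (hP : ∀ i, IsKernel (P i))
    (πE : Fin N → S → A → ℝ) (hπE : ∀ i, IsPolicy (πE i))
    (Ψ : S × A → Fin nc → ℝ)
    (ε : ℝ) (hε : 0 ≤ ε) (i j : Fin N) (hij : j ≠ i)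
    (q : (Fin N → S → A → ℝ) × (S → A → ℝ)) (hq : q ∈ SCAL γ ν P πE Ψ ε) :
    discrep γ ν P πE Ψ i (q.1 i) ≤ discrep γ ν P πE Ψ i (q.1 j) :=
  stmt10_general γ ν P πE Ψ ε i j q hq
end

section
/- Feasibility transfer to the McCormick relaxation: assume ν(s) > 0 for all s and let ε ≥ 0. Let (π_1,…,π_N,π_c) ∈ Φ(ε) be feasible for the CAL problem, and define for each i: μ_i := μ^i_{π_i}, σ_i(s) := Σ_{a∈A} μ_i(s,a), and θ_i(s,a) := π_c(s,a)·σ_i(s). Then for all i ∈ {1,…,N}, s ∈ S, a ∈ A: θ_i(s,a) ≥ 0; |μ_i(s,a) − θ_i(s,a)| ≤ ε·σ_i(s); θ_i(s,a) ≥ ν(s)·π_c(s,a); θ_i(s,a) ≥ σ_i(s) + (|A|/(1−γ))·(π_c(s,a) − 1); θ_i(s,a) ≤ σ_i(s) + ν(s)·(π_c(s,a) − 1); and θ_i(s,a) ≤ (|A|/(1−γ))·π_c(s,a). Consequently the optimal value of the McCormick relaxation is a lower bound for the optimal value of the CAL problem. -/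
open scoped BigOperators

variable {S A : Type*}

/-- Feasible occupation measures for environment `i`:
`μ ≥ 0` and `(B − γPⁱ)ᵀ μ = ν`. -/
def OccFeas [Fintype S] [Fintype A] (γ : ℝ) (ν : S → ℝ)
    (P : S × A → S → ℝ) (μ : S → A → ℝ) : Prop :=
  (∀ s a, 0 ≤ μ s a) ∧
    ∀ s, (∑ a, μ s a) - γ * ∑ p : S × A, P p s * μ p.1 p.2 = ν s

/-- The feasibility set of the McCormick relaxation of the CAL problem.  A point is a
tuple `(μ, π_c, θ, σ)`. -/
def mcFeas {N : ℕ} [Fintype S] [Fintype A] (γ : ℝ) (ν : S → ℝ)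
    (P : Fin N → S × A → S → ℝ) (ε : ℝ) :
    Set ((Fin N → S → A → ℝ) × (S → A → ℝ) ×
      (Fin N → S → A → ℝ) × (Fin N → S → ℝ)) :=
  {t | (∀ i, OccFeas γ ν (P i) (t.1 i)) ∧
    IsPolicy t.2.1 ∧
    (∀ i s a, 0 ≤ t.2.2.1 i s a) ∧
    (∀ i s, t.2.2.2 i s = ∑ a, t.1 i s a) ∧
    (∀ i s a, |t.1 i s a - t.2.2.1 i s a| ≤ ε * t.2.2.2 i s) ∧
    (∀ i s a, ν s * t.2.1 s a ≤ t.2.2.1 i s a) ∧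
    (∀ i s a, t.2.2.2 i s + ((Fintype.card A : ℝ) / (1 - γ)) * (t.2.1 s a - 1)
      ≤ t.2.2.1 i s a) ∧
    (∀ i s a, t.2.2.1 i s a ≤ t.2.2.2 i s + ν s * (t.2.1 s a - 1)) ∧
    (∀ i s a, t.2.2.1 i s a ≤ ((Fintype.card A : ℝ) / (1 - γ)) * t.2.1 s a)}

/-- Objective of the McCormick relaxation: `Σ_i ‖Ψᵀ μ_i − Ψᵀ μ^i_{π^{E_i}}‖₁`. -/
noncomputable def mcObj {N nc : ℕ} [Fintype S] [Fintype A] [DecidableEq S]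
    (γ : ℝ) (ν : S → ℝ) (P : Fin N → S × A → S → ℝ)
    (πE : Fin N → S → A → ℝ) (Ψ : S × A → Fin nc → ℝ)
    (t : (Fin N → S → A → ℝ) × (S → A → ℝ) ×
      (Fin N → S → A → ℝ) × (Fin N → S → ℝ)) : ℝ :=
  ∑ i, ∑ j, |∑ p : S × A, Ψ p j *
    (t.1 i p.1 p.2 - occ γ ν (P i) (πE i) p.1 p.2)|


set_option linter.unusedSectionVars false
set_option linter.unusedVariables false

section auxx
variable [Fintype S] [Fintype A] [DecidableEq S]

lemma iterVec_props {P : S × A → S → ℝ} {π : S → A → ℝ} {ν : S → ℝ}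
    (hP : IsKernel P) (hπ : IsPolicy π) (hν0 : ∀ s, 0 ≤ ν s) (hν1 : ∑ s, ν s = 1) :
    ∀ t : ℕ, (∀ s, 0 ≤ ((polMatrix P π).transpose ^ t).mulVec ν s) ∧
      ∑ s, ((polMatrix P π).transpose ^ t).mulVec ν s = 1 := by
  intro t
  induction t with
  | zero => simpa [Matrix.mulVec_one, Matrix.one_mulVec] using ⟨hν0, hν1⟩
  | succ t ih =>
    have hstep : ∀ s, ((polMatrix P π).transpose ^ (t+1)).mulVec ν s
        = ∑ s', polMatrix P π s' s * ((polMatrix P π).transpose ^ t).mulVec ν s' := by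
      intro s
      rw [pow_succ']
      rw [← Matrix.mulVec_mulVec]
      simp [Matrix.mulVec, dotProduct, Matrix.transpose_apply]
    constructor
    · intro s
      rw [hstep]
      exact Finset.sum_nonneg fun s' _ => mul_nonneg
        (Finset.sum_nonneg fun a _ => mul_nonneg (hπ.1 s' a) (hP.1 _ s)) (ih.1 s')
    · rw [Finset.sum_congr rfl fun s _ => hstep s, Finset.sum_comm]
      have : ∀ s', ∑ s, polMatrix P π s' s * ((polMatrix P π).transpose ^ t).mulVec ν s'
          = ((polMatrix P π).transpose ^ t).mulVec ν s' := by
        intro s'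
        rw [← Finset.sum_mul]
        have hrow : ∑ s, polMatrix P π s' s = 1 := by
          simp only [polMatrix, Matrix.of_apply]
          rw [Finset.sum_comm]
          simp only [← Finset.mul_sum]
          simp [hP.2, hπ.2 s']
        rw [hrow, one_mul]
      rw [Finset.sum_congr rfl fun s' _ => this s', ih.2]

lemma stateDist_summable {γ : ℝ} (hγ : γ ∈ Set.Ioo (0:ℝ) 1)
    {P : S × A → S → ℝ} {π : S → A → ℝ} {ν : S → ℝ}
    (hP : IsKernel P) (hπ : IsPolicy π) (hν0 : ∀ s, 0 ≤ ν s) (hν1 : ∑ s, ν s = 1)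
    (s : S) :
    Summable (fun t : ℕ => γ ^ t * (((polMatrix P π).transpose ^ t).mulVec ν s)) := by
  apply Summable.of_nonneg_of_le
    (fun t => mul_nonneg (pow_nonneg hγ.1.le t) ((iterVec_props hP hπ hν0 hν1 t).1 s))
    (fun t => ?_) (summable_geometric_of_lt_one hγ.1.le hγ.2)
  have hle : ((polMatrix P π).transpose ^ t).mulVec ν s ≤ 1 := by
    rw [← (iterVec_props hP hπ hν0 hν1 t).2]
    exact Finset.single_le_sum (fun s' _ => (iterVec_props hP hπ hν0 hν1 t).1 s')
      (Finset.mem_univ s)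
  calc γ ^ t * _ ≤ γ ^ t * 1 := by
        exact mul_le_mul_of_nonneg_left hle (pow_nonneg hγ.1.le t)
    _ = γ ^ t := mul_one _

lemma le_stateDist {γ : ℝ} (hγ : γ ∈ Set.Ioo (0:ℝ) 1)
    {P : S × A → S → ℝ} {π : S → A → ℝ} {ν : S → ℝ}
    (hP : IsKernel P) (hπ : IsPolicy π) (hν0 : ∀ s, 0 ≤ ν s) (hν1 : ∑ s, ν s = 1)
    (s : S) : ν s ≤ stateDist γ ν P π s := by
  have h := Summable.le_tsum (stateDist_summable hγ hP hπ hν0 hν1 s) 0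
    (fun t _ => mul_nonneg (pow_nonneg hγ.1.le t) ((iterVec_props hP hπ hν0 hν1 t).1 s))
  simpa [stateDist] using h

lemma stateDist_le {γ : ℝ} (hγ : γ ∈ Set.Ioo (0:ℝ) 1)
    {P : S × A → S → ℝ} {π : S → A → ℝ} {ν : S → ℝ}
    (hP : IsKernel P) (hπ : IsPolicy π) (hν0 : ∀ s, 0 ≤ ν s) (hν1 : ∑ s, ν s = 1)
    (s : S) : stateDist γ ν P π s ≤ 1 / (1 - γ) := by
  have h := Summable.tsum_le_tsum (f := fun t : ℕ => γ ^ t *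
      (((polMatrix P π).transpose ^ t).mulVec ν s)) (g := fun t : ℕ => γ ^ t)
    (fun t => by
      have hle : ((polMatrix P π).transpose ^ t).mulVec ν s ≤ 1 := by
        rw [← (iterVec_props hP hπ hν0 hν1 t).2]
        exact Finset.single_le_sum (fun s' _ => (iterVec_props hP hπ hν0 hν1 t).1 s')
          (Finset.mem_univ s)
      calc γ ^ t * _ ≤ γ ^ t * 1 := mul_le_mul_of_nonneg_left hle (pow_nonneg hγ.1.le t)
        _ = γ ^ t := mul_one _)
    (stateDist_summable hγ hP hπ hν0 hν1 s)
    (summable_geometric_of_lt_one hγ.1.le hγ.2)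
  rw [tsum_geometric_of_lt_one hγ.1.le hγ.2] at h
  simpa [stateDist, one_div] using h

lemma stateDist_rec {γ : ℝ} (hγ : γ ∈ Set.Ioo (0:ℝ) 1)
    {P : S × A → S → ℝ} {π : S → A → ℝ} {ν : S → ℝ}
    (hP : IsKernel P) (hπ : IsPolicy π) (hν0 : ∀ s, 0 ≤ ν s) (hν1 : ∑ s, ν s = 1)
    (s : S) :
    stateDist γ ν P π s = ν s + γ * ∑ s', polMatrix P π s' s * stateDist γ ν P π s' := by
  have hsum := stateDist_summable hγ hP hπ hν0 hν1 s
  have hsplit := Summable.tsum_eq_zero_add hsum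
  have hstep : ∀ t s, ((polMatrix P π).transpose ^ (t+1)).mulVec ν s
      = ∑ s', polMatrix P π s' s * ((polMatrix P π).transpose ^ t).mulVec ν s' := by
    intro t s
    rw [pow_succ', ← Matrix.mulVec_mulVec]
    simp [Matrix.mulVec, dotProduct, Matrix.transpose_apply]
  rw [stateDist, hsplit]
  simp only [pow_zero, one_mul, Matrix.one_mulVec]
  congr 1
  have : ∀ t : ℕ, γ ^ (t+1) * (((polMatrix P π).transpose ^ (t+1)).mulVec ν s)
      = ∑ s', γ * (polMatrix P π s' s * (γ ^ t * (((polMatrix P π).transpose ^ t).mulVec ν s'))) := by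
    intro t
    rw [hstep, Finset.mul_sum]
    refine Finset.sum_congr rfl fun s' _ => by ring
  rw [tsum_congr this, Summable.tsum_finsetSum (fun s' _ => (((stateDist_summable hγ hP hπ hν0 hν1 s').mul_left _).mul_left γ))]
  rw [Finset.mul_sum]
  refine Finset.sum_congr rfl fun s' _ => ?_
  rw [((stateDist_summable hγ hP hπ hν0 hν1 s').mul_left _).tsum_mul_left γ, tsum_mul_left]
  simp [stateDist, mul_assoc]

end auxx

section auxx2
variable [Fintype S] [Fintype A] [DecidableEq S]

lemma occ_row_sum {γ : ℝ} {ν : S → ℝ} {P : S × A → S → ℝ} {π : S → A → ℝ}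
    (hπ : IsPolicy π) (s : S) :
    ∑ a, occ γ ν P π s a = stateDist γ ν P π s := by
  simp only [occ, ← Finset.sum_mul, hπ.2 s, one_mul]

lemma mcFeas_mem [Nonempty A] {N : ℕ}
    (γ : ℝ) (hγ : γ ∈ Set.Ioo (0 : ℝ) 1)
    (ν : S → ℝ) (hν : IsInitDist ν)
    (P : Fin N → S × A → S → ℝ) (hP : ∀ i, IsKernel (P i))
    (ε : ℝ) (hε : 0 ≤ ε)
    (q : (Fin N → S → A → ℝ) × (S → A → ℝ)) (hq : q ∈ calFeas ε) :
    (fun i => occ γ ν (P i) (q.1 i), q.2,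
      fun i s a => q.2 s a * ∑ a', occ γ ν (P i) (q.1 i) s a',
      fun i s => ∑ a, occ γ ν (P i) (q.1 i) s a) ∈ mcFeas γ ν P ε := by
  obtain ⟨hq1, hq2, hq3⟩ := hq
  have hρ0 : ∀ (i : Fin N) s, 0 ≤ stateDist γ ν (P i) (q.1 i) s :=
    fun i s => le_trans (hν.1 s) (le_stateDist hγ (hP i) (hq1 i) hν.1 hν.2 s)
  have hσ : ∀ (i : Fin N) s, ∑ a, occ γ ν (P i) (q.1 i) s a
      = stateDist γ ν (P i) (q.1 i) s := fun i s => occ_row_sum (hq1 i) s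
  have hνρ : ∀ (i : Fin N) s, ν s ≤ stateDist γ ν (P i) (q.1 i) s :=
    fun i s => le_stateDist hγ (hP i) (hq1 i) hν.1 hν.2 s
  have h1γ : (0:ℝ) < 1 - γ := by linarith [hγ.2]
  have hcard : (1:ℝ) ≤ (Fintype.card A : ℝ) := by
    exact_mod_cast Fintype.card_pos
  have hρK : ∀ (i : Fin N) s, stateDist γ ν (P i) (q.1 i) s
      ≤ (Fintype.card A : ℝ) / (1 - γ) := by
    intro i s
    refine le_trans (stateDist_le hγ (hP i) (hq1 i) hν.1 hν.2 s) ?_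
    gcongr
  have hπc1 : ∀ s a, q.2 s a ≤ 1 := by
    intro s a
    rw [← hq2.2 s]
    exact Finset.single_le_sum (fun a' _ => hq2.1 s a') (Finset.mem_univ a)
  refine ⟨?_, hq2, ?_, fun i s => rfl, ?_, ?_, ?_, ?_, ?_⟩
  · -- OccFeas
    intro i
    refine ⟨fun s a => mul_nonneg (hq1 i |>.1 s a) (hρ0 i s), fun s => ?_⟩
    have hrec := stateDist_rec hγ (hP i) (hq1 i) hν.1 hν.2 s
    have hsum : ∑ p : S × A, P i p s * occ γ ν (P i) (q.1 i) p.1 p.2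
        = ∑ s', polMatrix (P i) (q.1 i) s' s * stateDist γ ν (P i) (q.1 i) s' := by
      rw [Fintype.sum_prod_type]
      refine Finset.sum_congr rfl fun s' _ => ?_
      simp only [occ, polMatrix, Matrix.of_apply, Finset.sum_mul]
      refine Finset.sum_congr rfl fun a _ => by ring
    rw [hsum, hσ i s]
    linarith [hrec]
  · exact fun i s a => mul_nonneg (hq2.1 s a) (by rw [hσ i s]; exact hρ0 i s)
  · -- |μ - θ| ≤ ε σ
    intro i s a
    dsimp only
    rw [hσ i s]
    simp only [occ]
    rw [← sub_mul, abs_mul, abs_of_nonneg (hρ0 i s)]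
    exact mul_le_mul_of_nonneg_right (hq3 i s a) (hρ0 i s)
  · intro i s a
    dsimp only
    rw [hσ i s, mul_comm (ν s)]
    exact mul_le_mul_of_nonneg_left (hνρ i s) (hq2.1 s a)
  · intro i s a
    dsimp only
    rw [hσ i s]
    nlinarith [hρK i s, hπc1 s a, hq2.1 s a]
  · intro i s a
    dsimp only
    rw [hσ i s]
    nlinarith [hνρ i s, hπc1 s a, hq2.1 s a]
  · intro i s a
    dsimp only
    rw [hσ i s]
    nlinarith [hρK i s, hq2.1 s a, hρ0 i s]

end auxx2

/-- feasibility transfer to the McCormick relaxation: assume `ν > 0` and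
`ε ≥ 0`.  If `(π_1,…,π_N,π_c) ∈ Φ(ε)` and we set `μ_i := μ^i_{π_i}`,
`σ_i(s) := Σ_a μ_i(s,a)`, `θ_i(s,a) := π_c(s,a)·σ_i(s)`, then all the McCormick
constraints hold; consequently the optimal value of the McCormick relaxation is a lower
bound for the optimal value of the CAL problem. -/
theorem stmt16 [Fintype S] [Fintype A] [Nonempty S] [Nonempty A] [DecidableEq S]
    {N nc : ℕ}
    (γ : ℝ) (hγ : γ ∈ Set.Ioo (0 : ℝ) 1)
    (ν : S → ℝ) (hν : IsInitDist ν) (hνpos : ∀ s, 0 < ν s)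
    (P : Fin N → S × A → S → ℝ) (hP : ∀ i, IsKernel (P i))
    (πE : Fin N → S → A → ℝ) (hπE : ∀ i, IsPolicy (πE i))
    (Ψ : S × A → Fin nc → ℝ)
    (ε : ℝ) (hε : 0 ≤ ε)
    (q : (Fin N → S → A → ℝ) × (S → A → ℝ)) (hq : q ∈ calFeas ε) :
    (∀ i s a,
      0 ≤ q.2 s a * ∑ a', occ γ ν (P i) (q.1 i) s a' ∧
      |occ γ ν (P i) (q.1 i) s a
          - q.2 s a * ∑ a', occ γ ν (P i) (q.1 i) s a'|
        ≤ ε * ∑ a', occ γ ν (P i) (q.1 i) s a' ∧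
      ν s * q.2 s a ≤ q.2 s a * ∑ a', occ γ ν (P i) (q.1 i) s a' ∧
      (∑ a', occ γ ν (P i) (q.1 i) s a')
          + ((Fintype.card A : ℝ) / (1 - γ)) * (q.2 s a - 1)
        ≤ q.2 s a * ∑ a', occ γ ν (P i) (q.1 i) s a' ∧
      q.2 s a * (∑ a', occ γ ν (P i) (q.1 i) s a')
        ≤ (∑ a', occ γ ν (P i) (q.1 i) s a') + ν s * (q.2 s a - 1) ∧
      q.2 s a * (∑ a', occ γ ν (P i) (q.1 i) s a')
        ≤ ((Fintype.card A : ℝ) / (1 - γ)) * q.2 s a) ∧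
    sInf (mcObj γ ν P πE Ψ '' mcFeas γ ν P ε) ≤
      sInf (calObj γ ν P πE Ψ '' calFeas ε) := by
  constructor
  · intro i s a
    have hm := mcFeas_mem γ hγ ν hν P hP ε hε q hq
    obtain ⟨hA, hB, hC, hD, hE, hF, hG, hH, hI⟩ := hm
    exact ⟨hC i s a, hE i s a, hF i s a, hG i s a, hH i s a, hI i s a⟩
  · refine csInf_le_csInf ?_ ?_ ?_
    · refine ⟨0, fun x hx => ?_⟩
      obtain ⟨t, _, rfl⟩ := hx
      exact Finset.sum_nonneg fun i _ => Finset.sum_nonneg fun j _ => abs_nonneg _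
    · exact ⟨calObj γ ν P πE Ψ q, q, hq, rfl⟩
    · rintro x ⟨q', hq', rfl⟩
      exact ⟨_, mcFeas_mem γ hγ ν hν P hP ε hε q' hq', rfl⟩
end
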